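/- If the sample mean p̄_n is a consistent estimator of p under the bandwagon rating process (i.e., p̄_n → p in probability), then Σ_{i=1}^{∞} λ_i² = ∞. -/

import Mathlib

open MeasureTheory ProbabilityTheory Finset Filter

/-- Sample mean of the first `n` ratings (ratings are indexed from 1). -/
noncomputable def pbar {Ω : Type*} (r : ℕ → Ω → ℝ) (n : ℕ) (ω : Ω) : ℝ :=
  (∑ i ∈ Finset.Icc 1 n, r i ω) / n

/-- σ-algebra generated by the first `n` ratings. -/
def ratingsAlg {Ω : Type*} (r : ℕ → Ω → ℝ) (n : ℕ) : MeasurableSpace Ω :=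
  ⨆ i ∈ Finset.Icc 1 n, MeasurableSpace.comap (r i) (inferInstance : MeasurableSpace ℝ)

/-- The bandwagon rating process of Xie et al., as used in the paper. -/
structure Bandwagon {Ω : Type*} [MeasurableSpace Ω] (μ : Measure Ω)
    (p : ℝ) (lam : ℕ → ℝ) (r : ℕ → Ω → ℝ) : Prop where
  prob : IsProbabilityMeasure μ
  hp : 0 < p ∧ p < 1
  hlam1 : lam 1 = 1
  hlam_nonneg : ∀ n, 1 ≤ n → 0 ≤ lam n
  hlam_mono : ∀ n, 2 ≤ n → lam n ≤ lam (n - 1)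
  hmeas : ∀ n, Measurable (r n)
  hbin : ∀ n, 1 ≤ n → ∀ ω, r n ω = 0 ∨ r n ω = 1
  hfirst : ∫ ω, r 1 ω ∂μ = p
  hcond : ∀ n, 2 ≤ n →
    μ[r n | ratingsAlg r (n - 1)] =ᵐ[μ]
      fun ω => lam n * p + (1 - lam n) * pbar r (n - 1) ω

/-- Affine-corrected rating `r̂ᵢ`. -/
noncomputable def rhat {Ω : Type*} (r : ℕ → Ω → ℝ) (lam : ℕ → ℝ) (i : ℕ) (ω : Ω) : ℝ :=
  (r i ω - (1 - lam i) * pbar r (i - 1) ω) / lam i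

/-! Write `V n = 𝔼[(p̄ₙ - p)²]`. Pulling `p̄ₙ - p` out of the conditional expectation of
`rₙ₊₁ - p` gives `𝔼[(p̄ₙ - p)(rₙ₊₁ - p)] = (1 - λₙ₊₁) V n`, so expanding
`p̄ₙ₊₁ - p = (n (p̄ₙ - p) + (rₙ₊₁ - p)) / (n + 1)` yields
`(n + 1)² V (n + 1) ≥ n (n + 2 - 2λₙ₊₁) V n`, and by induction
`V n ≥ p (1 - p) / 2 · ∏_{k=2}^n (1 - 2λₖ / (k + 1))`.
If `∑ λᵢ²` stayed bounded, then so would `∑ 2λₖ / (k + 1) ≤ ∑ λₖ² + ∑ 1 / k²`, the product would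
be bounded below by `exp (-3 ∑ 2λₖ / (k + 1)) > 0`, and `V n` would stay away from `0`.
But `|p̄ₙ - p| ≤ 1`, so convergence in probability forces `V n → 0`. -/

open Real Topology

lemma exp_neg_three_mul_le_one_sub {a : ℝ} (h0 : 0 ≤ a) (h1 : a ≤ 2 / 3) :
    exp (-(3 * a)) ≤ 1 - a := by
  rw [exp_neg, inv_le_comm₀ (exp_pos _) (by linarith)]
  calc (1 - a)⁻¹ ≤ 1 + 3 * a := by
        rw [inv_le_iff_one_le_mul₀ (by linarith)]
        nlinarith
    _ ≤ exp (3 * a) := by linarith [add_one_le_exp (3 * a)]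

lemma exp_neg_three_mul_sum_le_prod_one_sub {ι : Type*} {s : Finset ι} {x : ι → ℝ}
    (hx : ∀ i ∈ s, x i ∈ Set.Icc 0 (2 / 3)) :
    exp (-(3 * ∑ i ∈ s, x i)) ≤ ∏ i ∈ s, (1 - x i) := by
  rw [Finset.mul_sum, ← Finset.sum_neg_distrib, exp_sum]
  exact Finset.prod_le_prod (fun _ _ => (exp_pos _).le)
    fun i hi => exp_neg_three_mul_le_one_sub (hx i hi).1 (hx i hi).2

lemma sum_Icc_two_mul_div_succ_le (a : ℕ → ℝ) (n : ℕ) :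
    ∑ k ∈ Icc 2 n, 2 * a k / (k + 1) ≤ ∑ k ∈ Icc 1 n, a k ^ 2 + 2 := by
  have hterm : ∀ k ∈ Icc 2 n, 2 * a k / (k + 1) ≤ a k ^ 2 + ((k : ℝ) ^ 2)⁻¹ := by
    intro k hk
    have hk : (1 : ℝ) ≤ k := by exact_mod_cast (by simp at hk; omega : 1 ≤ k)
    have hsq : ((k : ℝ) + 1)⁻¹ ^ 2 ≤ ((k : ℝ) ^ 2)⁻¹ := by
      rw [inv_pow]; gcongr; linarith
    calc 2 * a k / (k + 1) = 2 * a k * ((k : ℝ) + 1)⁻¹ := div_eq_mul_inv _ _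
      _ ≤ a k ^ 2 + ((k : ℝ) + 1)⁻¹ ^ 2 := two_mul_le_add_sq _ _
      _ ≤ a k ^ 2 + ((k : ℝ) ^ 2)⁻¹ := by linarith
  calc ∑ k ∈ Icc 2 n, 2 * a k / (k + 1)
      ≤ ∑ k ∈ Icc 2 n, a k ^ 2 + ∑ k ∈ Icc 2 n, ((k : ℝ) ^ 2)⁻¹ := by
        rw [← Finset.sum_add_distrib]; exact Finset.sum_le_sum hterm
    _ ≤ ∑ k ∈ Icc 1 n, a k ^ 2 + ∑ k ∈ Ioo 0 (n + 1), ((k : ℝ) ^ 2)⁻¹ :=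
        add_le_add
          (Finset.sum_le_sum_of_subset_of_nonneg (Icc_subset_Icc_left (by norm_num))
            fun _ _ _ => sq_nonneg _)
          (Finset.sum_le_sum_of_subset_of_nonneg (fun k hk => by simp at hk ⊢; omega)
            fun _ _ _ => by positivity)
    _ ≤ ∑ k ∈ Icc 1 n, a k ^ 2 + 2 := by
        have := sum_Ioo_inv_sq_le (α := ℝ) 0 (n + 1)
        norm_num at this
        linarith

lemma mul_prod_Icc_le_of_mul_le {u a : ℕ → ℝ} (ha : ∀ n, 2 ≤ n → 0 ≤ a n)
    (h : ∀ n, 1 ≤ n → a (n + 1) * u n ≤ u (n + 1)) {n : ℕ} (hn : 1 ≤ n) :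
    u 1 * ∏ k ∈ Icc 2 n, a k ≤ u n := by
  induction n, hn using Nat.le_induction with
  | base => simp
  | succ n hn ih =>
    rw [prod_Icc_succ_top (by omega), ← mul_assoc, mul_comm]
    exact (mul_le_mul_of_nonneg_left ih (ha _ (by omega))).trans (h n hn)

lemma integrable_of_abs_le_one {Ω : Type*} [MeasurableSpace Ω] {μ : Measure Ω} [IsFiniteMeasure μ]
    {f : Ω → ℝ} (hf : Measurable f) (hb : ∀ ω, |f ω| ≤ 1) : Integrable f μ :=
  .of_bound hf.aestronglyMeasurable 1 (ae_of_all _ hb)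

lemma integral_mul_condExp_of_stronglyMeasurable {Ω : Type*} {m m₀ : MeasurableSpace Ω}
    {μ : Measure[m₀] Ω} [IsFiniteMeasure μ] (hm : m ≤ m₀) {f g : Ω → ℝ}
    (hf : StronglyMeasurable[m] f) (hfg : Integrable (f * g) μ) (hg : Integrable g μ) :
    ∫ ω, f ω * μ[g | m] ω ∂μ = ∫ ω, f ω * g ω ∂μ :=
  (integral_congr_ae (condExp_mul_of_stronglyMeasurable_left hf hfg hg).symm).trans
    (integral_condExp hm)

section ConvergenceInProbability
variable {Ω : Type*} [MeasurableSpace Ω] {μ : Measure Ω} [IsProbabilityMeasure μ]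

lemma integral_sq_le_of_abs_le_one {f : Ω → ℝ} (hf : Measurable f) (hb : ∀ ω, |f ω| ≤ 1)
    (ε : ℝ) : ∫ ω, f ω ^ 2 ∂μ ≤ ε ^ 2 + μ.real {ω | ε < |f ω|} := by
  set s := {ω | ε < |f ω|}
  have hs : MeasurableSet s := measurableSet_lt measurable_const hf.abs
  have hpt : ∀ ω, f ω ^ 2 ≤ ε ^ 2 + s.indicator 1 ω := by
    intro ω
    by_cases hω : ω ∈ s
    · rw [Set.indicator_of_mem hω, Pi.one_apply, ← sq_abs]
      nlinarith [abs_nonneg (f ω), hb ω, sq_nonneg ε]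
    · rw [Set.indicator_of_notMem hω, ← sq_abs, add_zero]
      exact pow_le_pow_left₀ (abs_nonneg _) (not_lt.mp hω) 2
  calc ∫ ω, f ω ^ 2 ∂μ ≤ ∫ ω, (ε ^ 2 + s.indicator 1 ω) ∂μ :=
        integral_mono (integrable_of_abs_le_one (hf.pow_const 2) fun ω => by
            rw [abs_pow]; exact pow_le_one₀ (abs_nonneg _) (hb ω))
          ((integrable_const _).add ((integrable_const 1).indicator hs)) hpt
    _ = ε ^ 2 + μ.real s := by
        rw [integral_add (integrable_const _) ((integrable_const 1).indicator hs),
          integral_const, integral_indicator_one hs]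
        simp

lemma tendsto_integral_sq_of_tendsto_measure_lt_abs {f : ℕ → Ω → ℝ}
    (hf : ∀ n, Measurable (f n)) (hb : ∀ n ω, |f n ω| ≤ 1)
    (h : ∀ ε, 0 < ε → Tendsto (fun n => μ {ω | ε < |f n ω|}) atTop (𝓝 0)) :
    Tendsto (fun n => ∫ ω, f n ω ^ 2 ∂μ) atTop (𝓝 0) := by
  refine tendsto_order.2 ⟨fun a ha => .of_forall fun n =>
    ha.trans_le (integral_nonneg fun _ => sq_nonneg _), fun a ha => ?_⟩
  have hε : 0 < √(a / 2) := by positivity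
  have hreal : Tendsto (fun n => μ.real {ω | √(a / 2) < |f n ω|}) atTop (𝓝 0) :=
    (ENNReal.tendsto_toReal ENNReal.zero_ne_top).comp (h _ hε)
  filter_upwards [hreal.eventually (gt_mem_nhds (half_pos ha))] with n hn
  have := integral_sq_le_of_abs_le_one (μ := μ) (hf n) (hb n) √(a / 2)
  rw [Real.sq_sqrt (half_pos ha).le] at this
  linarith

end ConvergenceInProbability

section Ratings
variable {Ω : Type*} {r : ℕ → Ω → ℝ}

lemma measurable_ratingsAlg {n i : ℕ} (hi : i ∈ Icc 1 n) : Measurable[ratingsAlg r n] (r i) :=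
  measurable_iff_comap_le.mpr (le_iSup₂_of_le i hi le_rfl)

lemma measurable_pbar_ratingsAlg (n : ℕ) : Measurable[ratingsAlg r n] (pbar r n) :=
  (Finset.measurable_sum _ fun _ hi => measurable_ratingsAlg hi).div_const _

lemma ratingsAlg_le [m₀ : MeasurableSpace Ω] (hr : ∀ n, Measurable (r n)) (n : ℕ) :
    ratingsAlg r n ≤ m₀ :=
  iSup₂_le fun i _ => measurable_iff_comap_le.mp (hr i)

lemma pbar_succ_sub (p : ℝ) (n : ℕ) (ω : Ω) :
    pbar r (n + 1) ω - p = (n * (pbar r n ω - p) + (r (n + 1) ω - p)) / (n + 1) := by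
  rcases Nat.eq_zero_or_pos n with rfl | hn
  · simp [pbar]
  · simp only [pbar, sum_Icc_succ_top (by omega : 1 ≤ n + 1)]
    field_simp
    push_cast
    ring

lemma pbar_mem_Icc (hr : ∀ n, 1 ≤ n → ∀ ω, r n ω ∈ Set.Icc 0 1) (n : ℕ) (ω : Ω) :
    pbar r n ω ∈ Set.Icc 0 1 := by
  have hsum : ∑ i ∈ Icc 1 n, r i ω ≤ n := by
    simpa using Finset.sum_le_sum fun i hi => (hr i (mem_Icc.mp hi).1 ω).2
  refine ⟨div_nonneg (sum_nonneg fun i hi => (hr i (mem_Icc.mp hi).1 ω).1) n.cast_nonneg, ?_⟩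
  rcases Nat.eq_zero_or_pos n with rfl | hn
  · simp [pbar]
  · exact (div_le_one (by exact_mod_cast hn)).mpr hsum

end Ratings

noncomputable def meanSqError {Ω : Type*} [MeasurableSpace Ω] (μ : Measure Ω) (p : ℝ)
    (r : ℕ → Ω → ℝ) (n : ℕ) : ℝ :=
  ∫ ω, (pbar r n ω - p) ^ 2 ∂μ

namespace Bandwagon
variable {Ω : Type*} [MeasurableSpace Ω] {μ : Measure Ω} {p : ℝ} {lam : ℕ → ℝ}
  {r : ℕ → Ω → ℝ}

lemma lam_le_one (hbw : Bandwagon μ p lam r) {n : ℕ} (hn : 1 ≤ n) : lam n ≤ 1 := by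
  induction n, hn using Nat.le_induction with
  | base => exact hbw.hlam1.le
  | succ n hn ih => simpa using (hbw.hlam_mono (n + 1) (by omega)).trans ih

lemma two_mul_lam_div_mem_Icc (hbw : Bandwagon μ p lam r) {k : ℕ} (hk : 2 ≤ k) :
    2 * lam k / (k + 1) ∈ Set.Icc 0 (2 / 3) := by
  have hk' : (3 : ℝ) ≤ k + 1 := by norm_cast; omega
  refine ⟨div_nonneg (by linarith [hbw.hlam_nonneg k (by omega)]) (by positivity), ?_⟩
  rw [div_le_div_iff₀ (by positivity) (by norm_num)]
  nlinarith [hbw.lam_le_one (n := k) (by omega), hbw.hlam_nonneg k (by omega)]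

lemma rating_mem_Icc (hbw : Bandwagon μ p lam r) {n : ℕ} (hn : 1 ≤ n) (ω : Ω) :
    r n ω ∈ Set.Icc 0 1 := by
  rcases hbw.hbin n hn ω with h | h <;> simp [h]

lemma abs_rating_sub_le_one (hbw : Bandwagon μ p lam r) {n : ℕ} (hn : 1 ≤ n) (ω : Ω) :
    |r n ω - p| ≤ 1 := by
  have := hbw.rating_mem_Icc hn ω
  rw [abs_le]; constructor <;> linarith [this.1, this.2, hbw.hp.1, hbw.hp.2]

lemma abs_pbar_sub_le_one (hbw : Bandwagon μ p lam r) (n : ℕ) (ω : Ω) :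
    |pbar r n ω - p| ≤ 1 := by
  have := pbar_mem_Icc (fun _ hk => hbw.rating_mem_Icc hk) n ω
  rw [abs_le]; constructor <;> linarith [this.1, this.2, hbw.hp.1, hbw.hp.2]

lemma measurable_pbar (hbw : Bandwagon μ p lam r) (n : ℕ) : Measurable (pbar r n) :=
  (measurable_pbar_ratingsAlg n).mono (ratingsAlg_le hbw.hmeas n) le_rfl

lemma integrable_rating (hbw : Bandwagon μ p lam r) {n : ℕ} (hn : 1 ≤ n) :
    Integrable (r n) μ :=
  have := hbw.prob
  integrable_of_abs_le_one (hbw.hmeas n) fun ω => abs_le.mpr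
    ⟨by linarith [(hbw.rating_mem_Icc hn ω).1], (hbw.rating_mem_Icc hn ω).2⟩

lemma integrable_pbar_sub_mul_rating_sub (hbw : Bandwagon μ p lam r) {n : ℕ} (hn : 1 ≤ n) :
    Integrable (fun ω => (pbar r n ω - p) * (r (n + 1) ω - p)) μ :=
  have := hbw.prob
  integrable_of_abs_le_one (((hbw.measurable_pbar n).sub_const p).mul
    ((hbw.hmeas _).sub_const p)) fun ω => by
      rw [abs_mul]
      exact mul_le_one₀ (hbw.abs_pbar_sub_le_one n ω) (abs_nonneg _)
        (hbw.abs_rating_sub_le_one (by omega) ω)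

lemma meanSqError_one (hbw : Bandwagon μ p lam r) : meanSqError μ p r 1 = p * (1 - p) := by
  have := hbw.prob
  have hbin (ω : Ω) : (pbar r 1 ω - p) ^ 2 = (1 - 2 * p) * r 1 ω + p ^ 2 := by
    simp only [pbar, Icc_self, sum_singleton, Nat.cast_one, div_one]
    rcases hbw.hbin 1 le_rfl ω with h | h <;> rw [h] <;> ring
  rw [meanSqError, integral_congr_ae (ae_of_all _ hbin),
    integral_add ((hbw.integrable_rating le_rfl).const_mul _) (integrable_const _),
    integral_const_mul, hbw.hfirst]
  simp
  ring

lemma integral_mul_rating_sub (hbw : Bandwagon μ p lam r) {n : ℕ} (hn : 1 ≤ n) :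
    ∫ ω, (pbar r n ω - p) * (r (n + 1) ω - p) ∂μ = (1 - lam (n + 1)) * meanSqError μ p r n := by
  have := hbw.prob
  have hm := ratingsAlg_le hbw.hmeas n
  have hr := hbw.integrable_rating (n := n + 1) (by omega)
  have hY : μ[r (n + 1) - fun _ => p | ratingsAlg r n]
      =ᵐ[μ] fun ω => (1 - lam (n + 1)) * (pbar r n ω - p) := by
    have hcond := hbw.hcond (n + 1) (by omega)
    rw [Nat.add_sub_cancel] at hcond
    filter_upwards [condExp_sub hr (integrable_const p) (ratingsAlg r n), hcond] with ω h1 h2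
    rw [h1, Pi.sub_apply, h2, condExp_const hm]
    ring
  calc ∫ ω, (pbar r n ω - p) * (r (n + 1) ω - p) ∂μ
      = ∫ ω, (pbar r n ω - p) * μ[r (n + 1) - fun _ => p | ratingsAlg r n] ω ∂μ :=
        (integral_mul_condExp_of_stronglyMeasurable hm
          ((measurable_pbar_ratingsAlg n).sub_const p).stronglyMeasurable
          (hbw.integrable_pbar_sub_mul_rating_sub hn)
          (hr.sub (integrable_const p))).symm
    _ = ∫ ω, (1 - lam (n + 1)) * (pbar r n ω - p) ^ 2 ∂μ := by
        refine integral_congr_ae ?_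
        filter_upwards [hY] with ω h
        rw [h]
        ring
    _ = (1 - lam (n + 1)) * meanSqError μ p r n := integral_const_mul _ _

lemma mul_meanSqError_le (hbw : Bandwagon μ p lam r) {n : ℕ} (hn : 1 ≤ n) :
    n * (n + 2 - 2 * lam (n + 1)) * meanSqError μ p r n
      ≤ (n + 1) ^ 2 * meanSqError μ p r (n + 1) := by
  have := hbw.prob
  have hX2 : Integrable (fun ω => (pbar r n ω - p) ^ 2) μ :=
    integrable_of_abs_le_one (((hbw.measurable_pbar n).sub_const p).pow_const 2) fun ω => by
      rw [abs_pow]; exact pow_le_one₀ (abs_nonneg _) (hbw.abs_pbar_sub_le_one n ω)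
  have hXY := hbw.integrable_pbar_sub_mul_rating_sub hn
  have hY2 : Integrable (fun ω => (r (n + 1) ω - p) ^ 2) μ :=
    integrable_of_abs_le_one (((hbw.hmeas _).sub_const p).pow_const 2) fun ω => by
      rw [abs_pow]; exact pow_le_one₀ (abs_nonneg _) (hbw.abs_rating_sub_le_one (by omega) ω)
  calc n * (n + 2 - 2 * lam (n + 1)) * meanSqError μ p r n
      = n ^ 2 * meanSqError μ p r n + 2 * n * ((1 - lam (n + 1)) * meanSqError μ p r n) := by
        ring
    _ ≤ n ^ 2 * meanSqError μ p r n
          + 2 * n * ∫ ω, (pbar r n ω - p) * (r (n + 1) ω - p) ∂μ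
          + ∫ ω, (r (n + 1) ω - p) ^ 2 ∂μ := by
        have hY2_nonneg : 0 ≤ ∫ ω, (r (n + 1) ω - p) ^ 2 ∂μ :=
          integral_nonneg fun _ => sq_nonneg _
        rw [hbw.integral_mul_rating_sub hn]
        linarith
    _ = ∫ ω, (n ^ 2 * (pbar r n ω - p) ^ 2 + 2 * n * ((pbar r n ω - p) * (r (n + 1) ω - p))
          + (r (n + 1) ω - p) ^ 2) ∂μ := by
        have h12 : Integrable (fun ω => n ^ 2 * (pbar r n ω - p) ^ 2
            + 2 * n * ((pbar r n ω - p) * (r (n + 1) ω - p))) μ :=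
          (hX2.const_mul _).add (hXY.const_mul _)
        rw [integral_add h12 hY2,
          integral_add (hX2.const_mul _) (hXY.const_mul _), integral_const_mul,
          integral_const_mul, meanSqError]
    _ = ∫ ω, (n + 1) ^ 2 * (pbar r (n + 1) ω - p) ^ 2 ∂μ := by
        refine integral_congr_ae (ae_of_all _ fun ω => ?_)
        dsimp only
        rw [pbar_succ_sub]
        field_simp
        ring
    _ = (n + 1) ^ 2 * meanSqError μ p r (n + 1) := integral_const_mul _ _

lemma prod_le_meanSqError (hbw : Bandwagon μ p lam r) {n : ℕ} (hn : 1 ≤ n) :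
    p * (1 - p) / 2 * ∏ k ∈ Icc 2 n, (1 - 2 * lam k / (k + 1))
      ≤ n / (n + 1) * meanSqError μ p r n := by
  have hstep (n : ℕ) (hn : 1 ≤ n) :
      (1 - 2 * lam (n + 1) / ((n + 1 : ℕ) + 1)) * (n / (n + 1) * meanSqError μ p r n)
        ≤ ((n + 1 : ℕ) : ℝ) / ((n + 1 : ℕ) + 1) * meanSqError μ p r (n + 1) := by
    have hpos : (0 : ℝ) < (n + 1) * (n + 2) := by positivity
    calc (1 - 2 * lam (n + 1) / ((n + 1 : ℕ) + 1)) * (n / (n + 1) * meanSqError μ p r n)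
        = n * (n + 2 - 2 * lam (n + 1)) * meanSqError μ p r n / ((n + 1) * (n + 2)) := by
          push_cast
          field_simp
          ring
      _ ≤ (n + 1) ^ 2 * meanSqError μ p r (n + 1) / ((n + 1) * (n + 2)) :=
          div_le_div_of_nonneg_right (hbw.mul_meanSqError_le hn) hpos.le
      _ = ((n + 1 : ℕ) : ℝ) / ((n + 1 : ℕ) + 1) * meanSqError μ p r (n + 1) := by
          push_cast
          field_simp
          ring
  -- `n / (n + 1) * V n` is what the recurrence multiplies by exactly `1 - 2 λₙ₊₁ / (n + 2)`.
  have key := mul_prod_Icc_le_of_mul_le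
    (u := fun n : ℕ => (n : ℝ) / (n + 1) * meanSqError μ p r n)
    (a := fun k : ℕ => 1 - 2 * lam k / (k + 1))
    (fun k hk => by linarith [(hbw.two_mul_lam_div_mem_Icc hk).2]) hstep hn
  simp only [Nat.cast_one, hbw.meanSqError_one] at key
  convert key using 2
  ring

lemma le_meanSqError_of_sum_sq_le (hbw : Bandwagon μ p lam r) {C : ℝ}
    (hC : ∀ n, ∑ i ∈ Icc 1 n, lam i ^ 2 ≤ C) {n : ℕ} (hn : 1 ≤ n) :
    p * (1 - p) / 2 * exp (-(3 * (C + 2))) ≤ meanSqError μ p r n := by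
  have hprod : exp (-(3 * (C + 2))) ≤ ∏ k ∈ Icc 2 n, (1 - 2 * lam k / (k + 1)) :=
    (exp_le_exp.mpr (by linarith [sum_Icc_two_mul_div_succ_le lam n, hC n])).trans
      (exp_neg_three_mul_sum_le_prod_one_sub fun k hk =>
        hbw.two_mul_lam_div_mem_Icc (mem_Icc.mp hk).1)
  have hpq : 0 ≤ p * (1 - p) / 2 := by nlinarith [hbw.hp.1, hbw.hp.2]
  calc p * (1 - p) / 2 * exp (-(3 * (C + 2)))
      ≤ p * (1 - p) / 2 * ∏ k ∈ Icc 2 n, (1 - 2 * lam k / (k + 1)) := by gcongr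
    _ ≤ n / (n + 1) * meanSqError μ p r n := hbw.prod_le_meanSqError hn
    _ ≤ meanSqError μ p r n :=
      mul_le_of_le_one_left (integral_nonneg fun _ => sq_nonneg _)
        ((div_le_one (by positivity)).mpr (by linarith))

end Bandwagon

theorem bandwagon_consistency_necessary_condition {Ω : Type*} [MeasurableSpace Ω] (μ : MeasureTheory.Measure Ω)
    (p : ℝ) (lam : ℕ → ℝ) (r : ℕ → Ω → ℝ)
    (hbw : Bandwagon μ p lam r)
    (hcons : ∀ ε : ℝ, 0 < ε →
      Filter.Tendsto (fun n : ℕ => μ {ω | ε < |pbar r n ω - p|})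
        Filter.atTop (nhds 0)) :
    Filter.Tendsto (fun n : ℕ => ∑ i ∈ Finset.Icc 1 n, (lam i) ^ 2)
      Filter.atTop Filter.atTop := by
  have := hbw.prob
  have hpq : 0 < p * (1 - p) / 2 := by nlinarith [hbw.hp.1, hbw.hp.2]
  have hmono : Monotone fun n => ∑ i ∈ Icc 1 n, lam i ^ 2 := fun _ _ hab =>
    sum_le_sum_of_subset_of_nonneg (Icc_subset_Icc_right hab) fun _ _ _ => sq_nonneg _
  refine (tendsto_atTop_of_monotone hmono).resolve_right ?_
  rintro ⟨C, hC⟩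
  have hmse : Tendsto (meanSqError μ p r) atTop (𝓝 0) :=
    tendsto_integral_sq_of_tendsto_measure_lt_abs (fun n => (hbw.measurable_pbar n).sub_const p)
      hbw.abs_pbar_sub_le_one hcons
  obtain ⟨n, hn, hn1⟩ :=
    ((hmse.eventually (gt_mem_nhds (mul_pos hpq (exp_pos (-(3 * (C + 2))))))).and
      (eventually_ge_atTop 1)).exists
  exact (hbw.le_meanSqError_of_sum_sq_le (hmono.ge_of_tendsto hC) hn1).not_gt hn
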